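/- For every permutation σ of {1,2} and every non-negative integer n: (1) (F_σ(n) + V₁) ∩ (F_σ(n) + V₂) = F_σ(n); (2) (F_σ(n) + W₁) ∩ (F_σ(n) + W₂) = F_σ(n). -/

import Mathlib

open Submodule

/-- For a permutation `σ` of `{1,2}`, the increasing sequence of subspaces `F_σ(n)`:
`F_σ(0) = ⊥`, `F_σ(n+1) = Σ_i (F_σ(n) + Vᵢ) ⊓ (F_σ(n) + W_{σ(i)})`. -/
noncomputable def Fsig {K E : Type*} [Field K] [AddCommGroup E] [Module K E]
    (V W : Fin 2 → Submodule K E) (σ : Equiv.Perm (Fin 2)) : ℕ → Submodule K E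
  | 0 => ⊥
  | n + 1 => ⨆ i : Fin 2, (Fsig V W σ n ⊔ V i) ⊓ (Fsig V W σ n ⊔ W (σ i))

/-!
Induction on `n`. If `(F + X₀) ∩ (F + X₁) = F` and `S = A₀ + A₁ ⊇ F` with `Aᵢ ⊆ F + Xᵢ`, then
`(S + X₀) ∩ (S + X₁) = S`: writing `x = a₁ + y₀ = a₀ + y₁` with `yᵢ ∈ Aᵢ + Xᵢ ⊆ F + Xᵢ`, the element
`y₀ - a₀ = y₁ - a₁` lies in `(F + X₀) ∩ (F + X₁) = F ⊆ S`, hence `x = a₀ + a₁ + (y₀ - a₀) ∈ S`.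
Each summand of `F_σ(n+1)` lies in `F_σ(n) + Vᵢ` and in `F_σ(n) + W_{σ(i)}`, so this applies with
`X = V`, and, after reindexing the sum by `σ`, with `X = W`.
-/

theorem iSup_fin_two {α : Type*} [CompleteLattice α] (f : Fin 2 → α) :
    ⨆ i, f i = f 0 ⊔ f 1 := by
  simp [← Finset.sup_univ_eq_iSup, Fin.univ_succ]

namespace Submodule

variable {R M : Type*} [Ring R] [AddCommGroup M] [Module R M]

theorem sup_inf_sup_eq_of_le_sup {F A₀ A₁ X₀ X₁ : Submodule R M}
    (hA₀ : A₀ ≤ F ⊔ X₀) (hA₁ : A₁ ≤ F ⊔ X₁) (hF : F ≤ A₀ ⊔ A₁)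
    (hFX : (F ⊔ X₀) ⊓ (F ⊔ X₁) = F) :
    (A₀ ⊔ A₁ ⊔ X₀) ⊓ (A₀ ⊔ A₁ ⊔ X₁) = A₀ ⊔ A₁ := by
  refine le_antisymm (fun x ⟨hx₀, hx₁⟩ => ?_) (le_inf le_sup_left le_sup_left)
  rw [sup_comm A₀, sup_assoc] at hx₀
  rw [sup_assoc] at hx₁
  obtain ⟨a₁, ha₁, y₀, hy₀, rfl⟩ := mem_sup.mp hx₀
  obtain ⟨a₀, ha₀, y₁, hy₁, hx⟩ := mem_sup.mp hx₁
  have hy₀F : y₀ ∈ F ⊔ X₀ := sup_le hA₀ le_sup_right hy₀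
  have hy₁F : y₁ ∈ F ⊔ X₁ := sup_le hA₁ le_sup_right hy₁
  have hy : y₀ - a₀ = y₁ - a₁ := by
    rw [sub_eq_sub_iff_add_eq_add, add_comm y₀, add_comm y₁, hx]
  have hyF : y₀ - a₀ ∈ F := by
    rw [← hFX]
    exact ⟨sub_mem hy₀F (hA₀ ha₀), hy ▸ sub_mem hy₁F (hA₁ ha₁)⟩
  rw [show a₁ + y₀ = a₀ + a₁ + (y₀ - a₀) by abel]
  exact add_mem (add_mem (mem_sup_left ha₀) (mem_sup_right ha₁)) (hF hyF)

end Submodule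

section Fsig

variable {K E : Type*} [Field K] [AddCommGroup E] [Module K E]
  (V W : Fin 2 → Submodule K E) (σ : Equiv.Perm (Fin 2)) (n : ℕ)

theorem Fsig_succ :
    Fsig V W σ (n + 1) =
      (Fsig V W σ n ⊔ V 0) ⊓ (Fsig V W σ n ⊔ W (σ 0)) ⊔
        (Fsig V W σ n ⊔ V 1) ⊓ (Fsig V W σ n ⊔ W (σ 1)) :=
  iSup_fin_two _

theorem Fsig_succ_eq_sup_symm :
    Fsig V W σ (n + 1) =
      (Fsig V W σ n ⊔ V (σ.symm 0)) ⊓ (Fsig V W σ n ⊔ W 0) ⊔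
        (Fsig V W σ n ⊔ V (σ.symm 1)) ⊓ (Fsig V W σ n ⊔ W 1) := by
  rw [← iSup_fin_two fun j => (Fsig V W σ n ⊔ V (σ.symm j)) ⊓ (Fsig V W σ n ⊔ W j),
    ← σ.iSup_comp]
  simp only [Equiv.symm_apply_apply]
  rfl

theorem Fsig_le_Fsig_succ : Fsig V W σ n ≤ Fsig V W σ (n + 1) :=
  le_iSup_of_le 0 (le_inf le_sup_left le_sup_left)

end Fsig

theorem stmt6_general {K E : Type*} [Field K] [AddCommGroup E] [Module K E]
    (V W : Fin 2 → Submodule K E)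
    (hV : IsCompl (V 0) (V 1)) (hW : IsCompl (W 0) (W 1)) :
    ∀ (σ : Equiv.Perm (Fin 2)) (n : ℕ),
      (Fsig V W σ n ⊔ V 0) ⊓ (Fsig V W σ n ⊔ V 1) = Fsig V W σ n ∧
      (Fsig V W σ n ⊔ W 0) ⊓ (Fsig V W σ n ⊔ W 1) = Fsig V W σ n := by
  intro σ n
  induction n with
  | zero => simp [Fsig, hV.disjoint.eq_bot, hW.disjoint.eq_bot]
  | succ n ih =>
    have hF := Fsig_le_Fsig_succ V W σ n
    constructor
    · rw [Fsig_succ] at hF ⊢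
      exact sup_inf_sup_eq_of_le_sup inf_le_left inf_le_left hF ih.1
    · rw [Fsig_succ_eq_sup_symm] at hF ⊢
      exact sup_inf_sup_eq_of_le_sup inf_le_right inf_le_right hF ih.2

/-- `F_σ(n)` is co-homogeneous with respect to `V₁ ⊕ V₂` and to `W₁ ⊕ W₂`. -/
theorem stmt6 {K E : Type*} [Field K] [AddCommGroup E] [Module K E]
    [FiniteDimensional K E] (hchar : (2 : K) ≠ 0)
    (V W : Fin 2 → Submodule K E)
    (hV : IsCompl (V 0) (V 1)) (hW : IsCompl (W 0) (W 1)) :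
    ∀ (σ : Equiv.Perm (Fin 2)) (n : ℕ),
      (Fsig V W σ n ⊔ V 0) ⊓ (Fsig V W σ n ⊔ V 1) = Fsig V W σ n ∧
      (Fsig V W σ n ⊔ W 0) ⊓ (Fsig V W σ n ⊔ W 1) = Fsig V W σ n :=
  stmt6_general V W hV hW
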